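/- For every natural number n ≥ 2 and all functions x, y : Fin n → ℕ: the multiset {x 0, …, x (n−1)} ≤_m the multiset {y 0, …, y (n−1)} if and only if the sum over i < n of n^(x i) is less than or equal to the sum over i < n of n^(y i); and the multiset {x 0, …, x (n−1)} <_m the multiset {y 0, …, y (n−1)} if and only if the sum over i < n of n^(x i) is strictly less than the sum over i < n of n^(y i). -/
import Mathlib


namespace MsetPaper

/-- The maximum element of a multiset of naturals (`0` for the empty multiset). -/
def mmax (s : Multiset ℕ) : ℕ := s.sup

/-- The strict multiset order `x <ₘ y` of the paper: either `x` is empty and `y` is not,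
or both are nonempty and either `max x < max y`, or the maxima agree and the multisets
with one occurrence of the maximum removed are again strictly ordered. -/
inductive MLt : Multiset ℕ → Multiset ℕ → Prop
  | empty {y : Multiset ℕ} : y ≠ 0 → MLt 0 y
  | maxLt {x y : Multiset ℕ} : x ≠ 0 → y ≠ 0 → mmax x < mmax y → MLt x y
  | maxEq {x y : Multiset ℕ} : x ≠ 0 → y ≠ 0 → mmax x = mmax y →
      MLt (x.erase (mmax x)) (y.erase (mmax y)) → MLt x y

/-- The (non-strict) multiset order `x ≤ₘ y`. -/
def MLe (x y : Multiset ℕ) : Prop := MLt x y ∨ x = y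

/-- The multiset of values taken by a vector. -/
def msetOf {n : ℕ} (x : Fin n → ℕ) : Multiset ℕ := (List.ofFn x : List ℕ)

def wgt (n : ℕ) (s : Multiset ℕ) : ℕ := (s.map (n ^ ·)).sum

lemma mmax_mem {s : Multiset ℕ} (hs : s ≠ 0) : mmax s ∈ s := by
  induction s using Multiset.induction with
  | empty => simp at hs
  | cons a s ih =>
    rcases eq_or_ne s 0 with rfl | h
    · simp [mmax]
    · have := ih h
      unfold mmax at *
      simp only [Multiset.sup_cons]
      rcases le_total a s.sup with h1 | h1
      · rw [sup_eq_right.mpr h1]; exact Multiset.mem_cons_of_mem this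
      · rw [sup_eq_left.mpr h1]; exact Multiset.mem_cons_self a s

lemma wgt_erase {n : ℕ} {s : Multiset ℕ} {m : ℕ} (hm : m ∈ s) :
    wgt n s = n ^ m + wgt n (s.erase m) := by
  conv_lhs => rw [← Multiset.cons_erase hm]
  simp [wgt]

lemma card_le_wgt {n : ℕ} (hn : 1 ≤ n) (s : Multiset ℕ) :
    Multiset.card s ≤ wgt n s := by
  induction s using Multiset.induction with
  | empty => simp [wgt]
  | cons a s ih =>
    have : 1 ≤ n ^ a := Nat.one_le_pow _ _ hn
    simp only [wgt, Multiset.map_cons, Multiset.sum_cons, Multiset.card_cons] at *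
    omega

lemma wgt_le {n : ℕ} (hn : 1 ≤ n) (s : Multiset ℕ) :
    wgt n s ≤ Multiset.card s * n ^ mmax s := by
  have := Multiset.sum_le_card_nsmul (s.map (n ^ ·)) (n ^ mmax s) ?_
  · simpa [wgt, mul_comm] using this
  · intro x hx
    obtain ⟨a, ha, rfl⟩ := Multiset.mem_map.mp hx
    exact Nat.pow_le_pow_right hn (Multiset.le_sup ha)

lemma wgt_lt_of_mlt {n : ℕ} (hn : 2 ≤ n) {s t : Multiset ℕ} (h : MLt s t)
    (hcard : Multiset.card s = Multiset.card t) (hle : Multiset.card t ≤ n) :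
    wgt n s < wgt n t := by
  induction h with
  | empty hy =>
    exfalso
    apply hy
    rw [← Multiset.card_eq_zero, ← hcard]
    simp
  | maxLt hx hy hmax =>
    rename_i x y
    have h1 : 1 ≤ n := by omega
    have hk1 : 1 ≤ Multiset.card y := Multiset.card_pos.mpr hy
    have hA : wgt n x ≤ Multiset.card x * n ^ mmax x := wgt_le h1 x
    have hB : wgt n y = n ^ mmax y + wgt n (y.erase (mmax y)) := wgt_erase (mmax_mem hy)
    have hC : Multiset.card (y.erase (mmax y)) ≤ wgt n (y.erase (mmax y)) := card_le_wgt h1 _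
    have hcy : Multiset.card (y.erase (mmax y)) = Multiset.card y - 1 :=
      Multiset.card_erase_of_mem (mmax_mem hy)
    have hpow : n ^ (mmax x + 1) ≤ n ^ mmax y := Nat.pow_le_pow_right h1 hmax
    have hP : 1 ≤ n ^ mmax x := Nat.one_le_pow _ _ (by omega)
    -- wgt x ≤ k * P < n * P + (k-1) ≤ wgt y
    rw [hcard] at hA
    set k := Multiset.card y with hk
    have key : k * n ^ mmax x < n ^ (mmax x + 1) + (k - 1) := by
      rw [pow_succ, mul_comm (n ^ mmax x) n]
      nlinarith [Nat.sub_add_cancel hk1]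
    calc wgt n x ≤ k * n ^ mmax x := hA
      _ < n ^ (mmax x + 1) + (k - 1) := key
      _ ≤ n ^ mmax y + wgt n (y.erase (mmax y)) := by
          have := hC; omega
      _ = wgt n y := hB.symm
  | maxEq hx hy hmax _ ih =>
    rename_i x y _
    have hcx : Multiset.card (x.erase (mmax x)) = Multiset.card x - 1 := by
      rw [Multiset.card_erase_of_mem (mmax_mem hx)]; rfl
    have hcy : Multiset.card (y.erase (mmax y)) = Multiset.card y - 1 := by
      rw [Multiset.card_erase_of_mem (mmax_mem hy)]; rfl
    have h1 : wgt n (x.erase (mmax x)) < wgt n (y.erase (mmax y)) := by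
      apply ih <;> omega
    have h2 : n ^ mmax x = n ^ mmax y := by rw [hmax]
    rw [wgt_erase (mmax_mem hx), wgt_erase (mmax_mem hy)]
    omega

lemma mlt_total : ∀ (k : ℕ) (s t : Multiset ℕ), Multiset.card s = k →
    Multiset.card t = k → MLt s t ∨ s = t ∨ MLt t s := by
  intro k
  induction k with
  | zero =>
    intro s t hs ht
    rw [Multiset.card_eq_zero] at hs ht
    subst hs ht; right; left; rfl
  | succ k ih =>
    intro s t hs ht
    have hs0 : s ≠ 0 := by intro h; subst h; simp at hs
    have ht0 : t ≠ 0 := by intro h; subst h; simp at ht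
    rcases lt_trichotomy (mmax s) (mmax t) with h | h | h
    · exact Or.inl (MLt.maxLt hs0 ht0 h)
    · have hcs : Multiset.card (s.erase (mmax s)) = Multiset.card s - 1 := by
        rw [Multiset.card_erase_of_mem (mmax_mem hs0)]; rfl
      have hct : Multiset.card (t.erase (mmax t)) = Multiset.card t - 1 := by
        rw [Multiset.card_erase_of_mem (mmax_mem ht0)]; rfl
      rcases ih (s.erase (mmax s)) (t.erase (mmax t)) (by omega) (by omega) with
        h1 | h1 | h1
      · exact Or.inl (MLt.maxEq hs0 ht0 h h1)
      · right; left
        rw [← Multiset.cons_erase (mmax_mem hs0), ← Multiset.cons_erase (mmax_mem ht0),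
          h1, h]
      · exact Or.inr (Or.inr (MLt.maxEq ht0 hs0 h.symm h1))
    · exact Or.inr (Or.inr (MLt.maxLt ht0 hs0 h))

/-- The arithmetic encoding: for `n ≥ 2`, the multiset orders on vectors of length `n`
coincide with comparison of the weighted sums `∑ n ^ (x i)`. -/
theorem stmt16 :
    ∀ n : ℕ, 2 ≤ n → ∀ x y : Fin n → ℕ,
      (MLe (msetOf x) (msetOf y) ↔ ∑ i : Fin n, n ^ x i ≤ ∑ i : Fin n, n ^ y i) ∧
      (MLt (msetOf x) (msetOf y) ↔ ∑ i : Fin n, n ^ x i < ∑ i : Fin n, n ^ y i) := by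
  intro n hn x y
  have hw : ∀ z : Fin n → ℕ, wgt n (msetOf z) = ∑ i : Fin n, n ^ z i := by
    intro z
    simp [wgt, msetOf, List.map_ofFn, List.sum_ofFn, Function.comp]
  have hcx : Multiset.card (msetOf x) = n := by simp [msetOf]
  have hcy : Multiset.card (msetOf y) = n := by simp [msetOf]
  have htot := mlt_total n (msetOf x) (msetOf y) hcx hcy
  have fwd : ∀ {s t : Multiset ℕ}, Multiset.card s = n → Multiset.card t = n →
      MLt s t → wgt n s < wgt n t := fun hs ht h =>
    wgt_lt_of_mlt hn h (hs.trans ht.symm) ht.le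
  rw [← hw x, ← hw y]
  constructor
  · constructor
    · rintro (h | h)
      · exact (fwd hcx hcy h).le
      · rw [h]
    · intro h
      rcases htot with h1 | h1 | h1
      · exact Or.inl h1
      · exact Or.inr h1
      · exact absurd (fwd hcy hcx h1) (by omega)
  · constructor
    · exact fwd hcx hcy
    · intro h
      rcases htot with h1 | h1 | h1
      · exact h1
      · exact absurd h (by simp [h1])
      · exact absurd (fwd hcy hcx h1) (by omega)

end MsetPaper
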